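/- Let k be a field of characteristic zero, d ≥ 4 an integer, R = k[x₀,x₁,x₂,x₃], and T_d ⊆ R the ideal generated by all monomials x₀^α x₁^β x₂^c x₃^e with α+β+c+e = d and d dividing β+2c+3e. Then for every linear form L ∈ R₁, the k-linear map from the degree-(d−1) homogeneous component of R/T_d to the degree-d homogeneous component of R/T_d induced by multiplication by L is not injective; that is, T_d fails the Weak Lefschetz Property in degree d−1. -/

import Mathlib

open MvPolynomial

/-!
Give the variable `x_t` the weight `t ∈ ℤ/d` and split a linear form `L = ∑ c_t x_t` into its
weight components `L_k`. The circulant matrix `(L_{i-j})_{i,j ∈ ℤ/d}` has all row sums equal to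
`L`, so its determinant is `L · f`, where `f` is the determinant of the matrix with one row replaced
by ones; `f` is homogeneous of degree `d - 1`. Each term of the determinant is a product of `d`
variables of total weight `0`, i.e. a multiple of a generator of `T_d`. Evaluating at a coordinate
vector `e_t` with `c_t ≠ 0` turns the circulant matrix into `c_t` times a permutation matrix, so
`f ≠ 0`, and since `T_d` is generated in degree `d`, `f ∉ T_d`.
-/

namespace Matrix

variable {n R : Type*} [Fintype n] [DecidableEq n] [CommRing R]

theorem det_eq_mul_det_updateRow_one {A : Matrix n n R} {s : R}
    (h : ∀ j, ∑ k, A k j = s) (i : n) :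
    A.det = s * (A.updateRow i fun _ => 1).det := by
  have hrows : ∑ k, (1 : R) • A k = fun _ => s := by
    simp only [one_smul]
    funext j
    exact (Finset.sum_apply j _ _).trans (h j)
  have := det_updateRow_sum A i fun _ => 1
  rw [hrows, one_smul] at this
  rw [← this, ← det_updateRow_smul]
  congr with j
  exact (mul_one s).symm

variable [AddCommGroup n]

omit [DecidableEq n] in
theorem sum_circulant_apply (v : n → R) (j : n) : ∑ k, circulant v k j = ∑ k, v k :=
  Equiv.sum_comp (Equiv.subRight j) v

theorem det_circulant_mem {v : n → R} {I : Ideal R}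
    (h : ∀ κ : n → n, ∑ i, κ i = 0 → ∏ i, v (κ i) ∈ I) : (circulant v).det ∈ I := by
  rw [det_apply']
  refine Ideal.sum_mem _ fun σ _ => Ideal.mul_mem_left _ _ (h (fun i => σ i - i) ?_)
  rw [Finset.sum_sub_distrib, Fintype.sum_equiv σ (fun i => σ i) (fun i => i) fun _ => rfl,
    sub_self]

theorem det_circulant_single (k : n) (c : R) :
    (circulant (Pi.single k c)).det =
      Equiv.Perm.sign (Equiv.subRight k) * c ^ Fintype.card n := by
  have : circulant (Pi.single k c) = c • Equiv.Perm.permMatrix R (Equiv.subRight k) := by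
    ext i j
    simp [circulant_apply, Pi.single_apply, Equiv.Perm.permMatrix, PEquiv.toMatrix_apply,
      eq_sub_iff_add_eq, eq_comm, add_comm]
  rw [this, det_smul, det_permutation, mul_comm]

end Matrix

namespace MvPolynomial

section CommSemiring

variable {σ R : Type*} [CommSemiring R]

theorem coeff_eq_zero_of_mem_span_of_degree_lt {S : Set (MvPolynomial σ R)} {n : ℕ}
    (hS : ∀ q ∈ S, q.IsHomogeneous n) {p : MvPolynomial σ R} (hp : p ∈ Ideal.span S)
    {s : σ →₀ ℕ} (hs : s.degree < n) : coeff s p = 0 := by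
  classical
  induction hp using Submodule.span_induction generalizing s with
  | mem q hq => exact (hS q hq).coeff_eq_zero hs.ne
  | zero => exact coeff_zero s
  | add x y _ _ hx hy => rw [coeff_add, hx hs, hy hs, add_zero]
  | smul r x _ hx =>
    rw [smul_eq_mul, coeff_mul]
    refine Finset.sum_eq_zero fun uv huv => ?_
    have : uv.2.degree ≤ s.degree := by
      rw [← Finset.HasAntidiagonal.mem_antidiagonal.mp huv, map_add]
      exact Nat.le_add_left _ _
    rw [hx (this.trans_lt hs), mul_zero]

theorem eq_zero_of_mem_span_of_isHomogeneous {S : Set (MvPolynomial σ R)} {n m : ℕ}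
    (hS : ∀ q ∈ S, q.IsHomogeneous n) {p : MvPolynomial σ R} (hp : p ∈ Ideal.span S)
    (hpm : p.IsHomogeneous m) (hmn : m < n) : p = 0 := by
  ext s
  rw [coeff_zero]
  by_cases hs : s.degree = m
  · exact coeff_eq_zero_of_mem_span_of_degree_lt hS hp (hs ▸ hmn)
  · exact hpm.coeff_eq_zero hs

variable {G : Type*} [DecidableEq G] [Fintype σ]

noncomputable def weightComponent (w : σ → G) (c : σ → R) (k : G) : MvPolynomial σ R :=
  ∑ t with w t = k, c t • X t

variable (w : σ → G) (c : σ → R)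

theorem sum_weightComponent [Fintype G] :
    ∑ k, weightComponent w c k = ∑ t, c t • X t :=
  Finset.sum_fiberwise _ w fun t => c t • X t

theorem isHomogeneous_weightComponent (k : G) : (weightComponent w c k).IsHomogeneous 1 := by
  rw [← mem_homogeneousSubmodule]
  exact Submodule.sum_mem _ fun t _ =>
    Submodule.smul_mem _ _ ((mem_homogeneousSubmodule _ _).mpr (isHomogeneous_X R t))

theorem eval_single_weightComponent [DecidableEq σ] (t : σ) (k : G) :
    eval (Pi.single t 1) (weightComponent w c k) = (Pi.single (w t) (c t) : G → R) k := by
  simp [weightComponent, Pi.single_apply, eq_comm]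

theorem prod_weightComponent_mem [AddCommMonoid G] {ι : Type*} [Fintype ι] [DecidableEq ι]
    {I : Ideal (MvPolynomial σ R)} (hI : ∀ τ : ι → σ, ∑ i, w (τ i) = 0 → ∏ i, X (τ i) ∈ I)
    {κ : ι → G} (hκ : ∑ i, κ i = 0) :
    ∏ i, weightComponent w c (κ i) ∈ I := by
  simp only [weightComponent, Finset.prod_univ_sum]
  refine Ideal.sum_mem _ fun τ hτ => ?_
  have hwτ : ∀ i, w (τ i) = κ i := fun i =>
    (Finset.mem_filter.mp (Fintype.mem_piFinset.mp hτ i)).2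
  rw [Finset.prod_congr rfl fun i _ => smul_eq_C_mul (X (τ i)) (c (τ i)),
    Finset.prod_mul_distrib]
  exact Ideal.mul_mem_left _ _ (hI τ (by simp only [hwτ, hκ]))

end CommSemiring

section CommRing

variable {σ R : Type*} [CommRing R]

theorem isHomogeneous_det {ι : Type*} [Fintype ι] [DecidableEq ι]
    (M : Matrix ι ι (MvPolynomial σ R)) (w : ι → ℕ) (h : ∀ i j, (M i j).IsHomogeneous (w i)) :
    M.det.IsHomogeneous (∑ i, w i) := by
  rw [Matrix.det_apply']
  refine IsHomogeneous.sum _ _ _ fun τ _ => ?_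
  have hprod : (∏ i, M (τ i) i).IsHomogeneous (∑ i, w i) := by
    rw [← Equiv.sum_comp τ w]
    exact IsHomogeneous.prod _ _ _ fun i _ => h (τ i) i
  rcases Int.units_eq_one_or (Equiv.Perm.sign τ) with hs | hs <;> rw [hs]
  · simpa using hprod
  · simpa using hprod.neg

variable [IsDomain R] [Fintype σ] [DecidableEq σ]
  {G : Type*} [AddCommGroup G] [Fintype G] [DecidableEq G]

theorem exists_isHomogeneous_ne_zero_mul_mem (w : σ → G) {c : σ → R} (hc : c ≠ 0)
    {I : Ideal (MvPolynomial σ R)} (hI : ∀ τ : G → σ, ∑ i, w (τ i) = 0 → ∏ i, X (τ i) ∈ I) :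
    ∃ f : MvPolynomial σ R, f.IsHomogeneous (Fintype.card G - 1) ∧ f ≠ 0 ∧
      (∑ t, c t • X t) * f ∈ I := by
  set M := Matrix.circulant (weightComponent w c)
  have hdet : M.det = (∑ t, c t • X t) * (M.updateRow 0 fun _ => 1).det :=
    Matrix.det_eq_mul_det_updateRow_one
      (fun j => (Matrix.sum_circulant_apply _ j).trans (sum_weightComponent w c)) 0
  refine ⟨_, ?_, ?_,
    hdet ▸ Matrix.det_circulant_mem fun κ hκ => prod_weightComponent_mem w c hI hκ⟩
  · have hw : ∑ i : G, (if i = 0 then 0 else 1) = Fintype.card G - 1 := by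
      simp [Finset.sum_ite, Finset.filter_ne', Finset.card_univ]
    rw [← hw]
    refine isHomogeneous_det _ _ fun i j => ?_
    rcases eq_or_ne i 0 with rfl | hi
    · simpa using isHomogeneous_one σ R
    · rw [Matrix.updateRow_ne hi, if_neg hi]
      exact isHomogeneous_weightComponent w c (i - j)
  · obtain ⟨t, ht⟩ : ∃ t, c t ≠ 0 := Function.ne_iff.mp hc
    intro hf
    have hM : (eval (Pi.single t 1)).mapMatrix M = Matrix.circulant (Pi.single (w t) (c t)) := by
      simp [M, Matrix.map_circulant, eval_single_weightComponent]
    have := congrArg (eval (Pi.single t 1)) hdet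
    rw [hf, mul_zero, map_zero, RingHom.map_det, hM, Matrix.det_circulant_single] at this
    rcases Int.units_eq_one_or (Equiv.Perm.sign (Equiv.subRight (w t))) with h | h <;>
      exact ht (by simpa [h] using this)

end CommRing

end MvPolynomial

def weightDivisibleMonomials (K : Type*) [CommSemiring K] (d : ℕ) :
    Set (MvPolynomial (Fin 4) K) :=
  {m | ∃ a b c e : ℕ, a + b + c + e = d ∧ d ∣ b + 2 * c + 3 * e ∧
    m = X 0 ^ a * X 1 ^ b * X 2 ^ c * X 3 ^ e}

section WeightDivisibleMonomials

variable {K : Type*} [CommSemiring K] {d : ℕ}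

theorem isHomogeneous_of_mem_weightDivisibleMonomials {m : MvPolynomial (Fin 4) K}
    (hm : m ∈ weightDivisibleMonomials K d) : m.IsHomogeneous d := by
  obtain ⟨a, b, c, e, rfl, -, rfl⟩ := hm
  exact (((isHomogeneous_X_pow 0 a).mul (isHomogeneous_X_pow 1 b)).mul
    (isHomogeneous_X_pow 2 c)).mul (isHomogeneous_X_pow 3 e)

theorem prod_X_mem_span_weightDivisibleMonomials {ι : Type*} [Fintype ι] (τ : ι → Fin 4)
    (hcard : Fintype.card ι = d) (hτ : ∑ i, ((τ i : ℕ) : ZMod d) = 0) :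
    ∏ i, X (τ i) ∈ Ideal.span (weightDivisibleMonomials K d) := by
  classical
  set n : Fin 4 → ℕ := fun t => Fintype.card {i // τ i = t}
  have hprod : ∏ i, (X (τ i) : MvPolynomial (Fin 4) K) = ∏ t, X t ^ n t := by
    simp [n, ← Fintype.prod_fiberwise' τ X]
  have hdeg : ∑ t, n t = d := by
    rw [← hcard, ← Fintype.card_sigma]
    exact Fintype.card_congr (Equiv.sigmaFiberEquiv τ)
  have hweight : ∑ t, n t * (t : ℕ) = ∑ i, (τ i : ℕ) := by
    simpa [n] using Fintype.sum_fiberwise' τ fun t => (t : ℕ)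
  have hdvd : d ∣ ∑ i, (τ i : ℕ) := by
    rw [← ZMod.natCast_eq_zero_iff]
    push_cast
    exact hτ
  rw [Fin.sum_univ_four] at hdeg hweight
  rw [hprod, Fin.prod_univ_four]
  refine Ideal.subset_span ⟨n 0, n 1, n 2, n 3, hdeg, ?_, rfl⟩
  simpa [← hweight, mul_comm] using hdvd

end WeightDivisibleMonomials

theorem stmt3 (K : Type*) [Field K] (d : ℕ) (hd : 4 ≤ d)
    (Td : Ideal (MvPolynomial (Fin 4) K))
    (hTd : Td = Ideal.span {m : MvPolynomial (Fin 4) K |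
      ∃ a b c e : ℕ, a + b + c + e = d ∧ d ∣ b + 2 * c + 3 * e ∧
        m = X 0 ^ a * X 1 ^ b * X 2 ^ c * X 3 ^ e})
    (L : MvPolynomial (Fin 4) K) (hL : L.IsHomogeneous 1) :
    ∃ f : MvPolynomial (Fin 4) K,
      f.IsHomogeneous (d - 1) ∧ f ∉ Td ∧ L * f ∈ Td := by
  change Td = Ideal.span (weightDivisibleMonomials K d) at hTd
  subst hTd
  have : NeZero d := ⟨by omega⟩
  have hnot_mem : ∀ f, f.IsHomogeneous (d - 1) → f ≠ 0 →
      f ∉ Ideal.span (weightDivisibleMonomials K d) := fun f hf hf0 hfT =>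
    hf0 (eq_zero_of_mem_span_of_isHomogeneous
      (fun _ => isHomogeneous_of_mem_weightDivisibleMonomials) hfT hf (by omega))
  have hL_span : L ∈ Submodule.span K (Set.range X) := by
    rwa [← homogeneousSubmodule_one_eq_span_X, mem_homogeneousSubmodule]
  obtain ⟨c, rfl⟩ := (Submodule.mem_span_range_iff_exists_fun K).mp hL_span
  rcases eq_or_ne c 0 with rfl | hc
  · have hX := isHomogeneous_X_pow (R := K) (0 : Fin 4) (d - 1)
    exact ⟨_, hX, hnot_mem _ hX (pow_ne_zero _ (X_ne_zero _)), by simp⟩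
  obtain ⟨f, hf, hf0, hLf⟩ := exists_isHomogeneous_ne_zero_mul_mem
    (fun t : Fin 4 => ((t : ℕ) : ZMod d)) hc
    fun τ hτ => prod_X_mem_span_weightDivisibleMonomials τ (ZMod.card d) hτ
  rw [ZMod.card] at hf
  exact ⟨f, hf, hnot_mem f hf hf0, hLf⟩
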